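/- Let f : [0,1]² → ℝ be continuous, θ ∈ ℝ and k ∈ ℕ. The function A ↦ θ ∑_{r,s=1}^k f(r/k, s/k) A(r,s) − 2 log k − ∑_{r,s=1}^k A(r,s) log A(r,s) (with 0 log 0 = 0) attains its supremum over 𝓜_k at a unique matrix, and this unique maximizer equals the entrywise limit A_{k,θ} of the iterative proportional fitting iterates B_m. -/

import Mathlib

open MeasureTheory Filter Topology
open scoped ENNReal

noncomputable section

/-- The unit square `[0,1]²` in `ℝ × ℝ`. -/
def unitSq : Set (ℝ × ℝ) := Set.Icc 0 1 ×ˢ Set.Icc 0 1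

/-- Lebesgue measure restricted to `[0,1]`. -/
def unif01 : Measure ℝ := volume.restrict (Set.Icc 0 1)

/-- Lebesgue (uniform) measure on the unit square. -/
def usq : Measure (ℝ × ℝ) := unif01.prod unif01

/-- `𝓜`: Borel probability measures on `[0,1]²` with both marginals Lebesgue on `[0,1]`. -/
def MM : Set (Measure (ℝ × ℝ)) :=
  {μ | IsProbabilityMeasure μ ∧ μ.map Prod.fst = unif01 ∧ μ.map Prod.snd = unif01}

/-- The class `𝓒` of continuous functions on the unit square, not identically zero,
with all row and column integrals vanishing. -/
def memC (f : ℝ × ℝ → ℝ) : Prop :=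
  ContinuousOn f unitSq ∧ (∃ p ∈ unitSq, f p ≠ 0) ∧
    (∀ x ∈ Set.Icc (0 : ℝ) 1, (∫ z in (0 : ℝ)..1, f (x, z)) = 0) ∧
    (∀ y ∈ Set.Icc (0 : ℝ) 1, (∫ z in (0 : ℝ)..1, f (z, y)) = 0)

open scoped Classical in
/-- Kullback–Leibler divergence `D(μ‖ν)`, equal to `∫ log(dμ/dν) dμ` when `μ ≪ ν`
(and this integral exists), and `+∞` otherwise. -/
def KL (μ ν : Measure (ℝ × ℝ)) : ℝ≥0∞ :=
  if μ ≪ ν ∧ Integrable (fun x => Real.log ((μ.rnDeriv ν x).toReal)) μ then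
    ENNReal.ofReal (∫ x, Real.log ((μ.rnDeriv ν x).toReal) ∂μ)
  else ⊤

/-- The objective `θ μ[f] − D(μ‖u)`, as an extended real. -/
def objE (f : ℝ × ℝ → ℝ) (θ : ℝ) (μ : Measure (ℝ × ℝ)) : EReal :=
  ((θ * ∫ p, f p ∂μ : ℝ) : EReal) - (KL μ usq : EReal)

/-- `∑_{i=1}^n f(i/n, π(i)/n)`. -/
def permStat (f : ℝ × ℝ → ℝ) (n : ℕ) (π : Equiv.Perm (Fin n)) : ℝ :=
  ∑ i : Fin n, f ((i.1 + 1 : ℝ) / n, ((π i).1 + 1 : ℝ) / n)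

/-- The log normalizing constant `Z_n(f,θ)`. -/
def Zn (f : ℝ × ℝ → ℝ) (θ : ℝ) (n : ℕ) : ℝ :=
  Real.log (∑ π : Equiv.Perm (Fin n), Real.exp (θ * permStat f n π))

open scoped Classical in
/-- The probability that a sample from `Q_{n,f,θ}` satisfies `p`. -/
def Qprob (f : ℝ × ℝ → ℝ) (θ : ℝ) (n : ℕ) (p : Equiv.Perm (Fin n) → Prop) : ℝ :=
  ∑ π : Equiv.Perm (Fin n), if p π then Real.exp (θ * permStat f n π - Zn f θ n) else 0

/-- `𝓜_k`: `k×k` matrices with nonnegative entries and all row and column sums `1/k`. -/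
def Mk (k : ℕ) : Set (Matrix (Fin k) (Fin k) ℝ) :=
  {A | (∀ r s, 0 ≤ A r s) ∧ (∀ r, ∑ s, A r s = 1 / k) ∧ (∀ s, ∑ r, A r s = 1 / k)}

/-- The iterative proportional fitting iterates `B_m`, starting from
`B_0(r,s) = exp(θ f(r/k, s/k))`: odd steps normalize rows, even steps normalize columns. -/
def ipfp (f : ℝ × ℝ → ℝ) (θ : ℝ) (k : ℕ) : ℕ → Matrix (Fin k) (Fin k) ℝ
  | 0 => Matrix.of fun r s => Real.exp (θ * f ((r.1 + 1 : ℝ) / k, (s.1 + 1 : ℝ) / k))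
  | m + 1 =>
    if Even m then
      Matrix.of fun r s => ipfp f θ k m r s / (k * ∑ l, ipfp f θ k m r l)
    else
      Matrix.of fun r s => ipfp f θ k m r s / (k * ∑ l, ipfp f θ k m l s)

/-- The discrete objective `θ ∑ f(r/k,s/k) A(r,s) − 2 log k − ∑ A(r,s) log A(r,s)`
(with the convention `0 log 0 = 0`, which holds for `Real.log`). -/
def objk (f : ℝ × ℝ → ℝ) (θ : ℝ) (k : ℕ) (A : Matrix (Fin k) (Fin k) ℝ) : ℝ :=
  θ * ∑ r, ∑ s, f ((r.1 + 1 : ℝ) / k, (s.1 + 1 : ℝ) / k) * A r s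
    - 2 * Real.log k - ∑ r, ∑ s, A r s * Real.log (A r s)

/-- `W_k(f,θ)`, the supremum of the discrete objective over `𝓜_k`. -/
def Wk (f : ℝ × ℝ → ℝ) (k : ℕ) (θ : ℝ) : ℝ := sSup (objk f θ k '' Mk k)

/-!
Every iterate is a diagonal scaling `diag x · B₀ · diag y` of the kernel `B₀`, and a scaling of
`B₀` lying in `𝓜_k` is the unique maximizer of the objective: the objective falls short of its
value there by a relative entropy, which Gibbs' inequality controls.

Along the iteration the potential `-∑ log B_m` (up to an additive constant, `k²` times the
relative entropy of the uniform matrix with respect to `B_m`) decreases, since a row step adds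
`k ∑_r log (k · rowsum_r) ≤ 0`; as the entries are at most `1`, it is also bounded below. The bound on the potential bounds the
entries from below, so the column-normalized iterates have positive cluster points. At a cluster
point the decrease vanishes, which forces its row sums to be `1/k` as well, and the scaling form
survives as the closed cross-ratio identities. Hence every cluster point is the unique maximizer,
the column-normalized iterates converge to it, and one more row normalization shows that the
row-normalized ones do too.
-/

open Finset InformationTheory

lemma sub_sub_mul_log_sub_log_eq {p q : ℝ} (hq : 0 < q) :
    q - p - p * (Real.log q - Real.log p) = q * klFun (p / q) := by
  rcases eq_or_ne p 0 with rfl | hp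
  · simp [klFun_apply]
  · rw [klFun_apply, Real.log_div hp hq.ne']
    field_simp
    ring

section Gibbs

variable {ι : Type*} [Fintype ι] {p q : ι → ℝ}

lemma neg_sum_mul_log_sub_log_eq_sum_mul_klFun (hq : ∀ i, 0 < q i) (hsum : ∑ i, p i = ∑ i, q i) :
    -∑ i, p i * (Real.log (q i) - Real.log (p i)) = ∑ i, q i * klFun (p i / q i) := by
  simp_rw [← sub_sub_mul_log_sub_log_eq (hq _), sum_sub_distrib, hsum]
  ring

lemma sum_mul_log_sub_log_nonpos (hp : ∀ i, 0 ≤ p i) (hq : ∀ i, 0 < q i)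
    (hsum : ∑ i, p i = ∑ i, q i) : ∑ i, p i * (Real.log (q i) - Real.log (p i)) ≤ 0 := by
  have := neg_sum_mul_log_sub_log_eq_sum_mul_klFun hq hsum
  have : 0 ≤ ∑ i, q i * klFun (p i / q i) :=
    sum_nonneg fun i _ => mul_nonneg (hq i).le (klFun_nonneg (div_nonneg (hp i) (hq i).le))
  linarith

lemma eq_of_sum_mul_log_sub_log_eq_zero (hp : ∀ i, 0 ≤ p i) (hq : ∀ i, 0 < q i)
    (hsum : ∑ i, p i = ∑ i, q i) (h : ∑ i, p i * (Real.log (q i) - Real.log (p i)) = 0) :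
    p = q := by
  have hkl := neg_sum_mul_log_sub_log_eq_sum_mul_klFun hq hsum
  rw [h, neg_zero, eq_comm, sum_eq_zero_iff_of_nonneg fun i _ =>
    mul_nonneg (hq i).le (klFun_nonneg (div_nonneg (hp i) (hq i).le))] at hkl
  funext i
  have := (mul_eq_zero.1 (hkl i (mem_univ i))).resolve_left (hq i).ne'
  rwa [klFun_eq_zero_iff (div_nonneg (hp i) (hq i).le), div_eq_one_iff_eq (hq i).ne'] at this

lemma sum_log_nonpos_of_sum_eq_card (hq : ∀ i, 0 < q i) (hsum : ∑ i, q i = Fintype.card ι) :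
    ∑ i, Real.log (q i) ≤ 0 := by
  simpa using sum_mul_log_sub_log_nonpos (p := 1) (fun _ => zero_le_one) hq (by simp [hsum])

lemma eq_one_of_sum_log_eq_zero (hq : ∀ i, 0 < q i) (hsum : ∑ i, q i = Fintype.card ι)
    (h : ∑ i, Real.log (q i) = 0) : q = 1 :=
  (eq_of_sum_mul_log_sub_log_eq_zero (p := 1) (fun _ => zero_le_one) hq (by simp [hsum])
    (by simpa using h)).symm

end Gibbs

lemma Filter.Tendsto.of_even_of_odd {X : Type*} [TopologicalSpace X] {u : ℕ → X} {a : X}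
    (heven : Tendsto (fun n => u (2 * n)) atTop (𝓝 a))
    (hodd : Tendsto (fun n => u (2 * n + 1)) atTop (𝓝 a)) : Tendsto u atTop (𝓝 a) := by
  intro s hs
  rw [mem_map]
  obtain ⟨N₁, h₁⟩ := eventually_atTop.1 (heven hs)
  obtain ⟨N₂, h₂⟩ := eventually_atTop.1 (hodd hs)
  filter_upwards [eventually_ge_atTop (2 * (N₁ + N₂))] with n hn
  obtain ⟨j, rfl | rfl⟩ := Nat.even_or_odd' n
  · exact h₁ j (by omega)
  · exact h₂ j (by omega)

lemma MapClusterPt.eq_of_tendsto {X α : Type*} [TopologicalSpace X] [T2Space X] {l : Filter α}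
    {u : α → X} {x y : X} (hx : MapClusterPt x l u) (hy : Tendsto u l (𝓝 y)) : x = y :=
  not_not.1 fun h => clusterPt_iff_not_disjoint.1 (ClusterPt.mono hx hy) (disjoint_nhds_nhds.2 h)

namespace Matrix

variable {ι κ : Type*}

def IsScaling (K B : Matrix ι κ ℝ) : Prop :=
  ∃ x : ι → ℝ, ∃ y : κ → ℝ, (∀ i, 0 < x i) ∧ (∀ j, 0 < y j) ∧ ∀ i j, B i j = x i * K i j * y j

lemma IsScaling.pos {K B : Matrix ι κ ℝ} (h : IsScaling K B) (hK : ∀ i j, 0 < K i j) (i : ι)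
    (j : κ) : 0 < B i j := by
  obtain ⟨x, y, hx, hy, hB⟩ := h
  rw [hB]
  exact mul_pos (mul_pos (hx i) (hK i j)) (hy j)

lemma IsScaling.transpose {K B : Matrix ι κ ℝ} (h : IsScaling K B) : IsScaling Kᵀ Bᵀ := by
  obtain ⟨x, y, hx, hy, hB⟩ := h
  exact ⟨y, x, hy, hx, fun j i => by rw [transpose_apply, hB]; simp only [transpose_apply]; ring⟩

lemma IsScaling.cross_mul_eq {K B : Matrix ι κ ℝ} (h : IsScaling K B) (i i' : ι) (j j' : κ) :
    B i j * B i' j' * K i j' * K i' j = B i j' * B i' j * K i j * K i' j' := by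
  obtain ⟨x, y, -, -, hB⟩ := h
  simp only [hB]
  ring

lemma isScaling_of_cross_mul_eq [Nonempty ι] [Nonempty κ] {K B : Matrix ι κ ℝ}
    (hK : ∀ i j, 0 < K i j) (hB : ∀ i j, 0 < B i j)
    (h : ∀ i i' j j', B i j * B i' j' * K i j' * K i' j = B i j' * B i' j * K i j * K i' j') :
    IsScaling K B := by
  obtain ⟨i₀⟩ := ‹Nonempty ι›
  obtain ⟨j₀⟩ := ‹Nonempty κ›
  refine ⟨fun i => B i j₀ / K i j₀, fun j => B i₀ j * K i₀ j₀ / (K i₀ j * B i₀ j₀),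
    fun i => div_pos (hB i j₀) (hK i j₀),
    fun j => div_pos (mul_pos (hB i₀ j) (hK i₀ j₀)) (mul_pos (hK i₀ j) (hB i₀ j₀)), fun i j => ?_⟩
  have := (hK i j₀).ne'; have := (hK i₀ j).ne'; have := (hB i₀ j₀).ne'
  field_simp
  linear_combination h i i₀ j j₀

lemma isScaling_of_mapClusterPt {α : Type*} [Nonempty ι] [Nonempty κ] {l : Filter α}
    {K L : Matrix ι κ ℝ} {B : α → Matrix ι κ ℝ} (hK : ∀ i j, 0 < K i j)
    (hL : ∀ i j, 0 < L i j) (hB : ∀ n, IsScaling K (B n)) (hcl : MapClusterPt L l B) :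
    IsScaling K L := by
  have he : ∀ i j, Continuous fun M : Matrix ι κ ℝ => M i j := fun i j =>
    continuous_id.matrix_elem i j
  have hclosed : IsClosed {M : Matrix ι κ ℝ | ∀ i i' j j',
      M i j * M i' j' * K i j' * K i' j = M i j' * M i' j * K i j * K i' j'} := by
    simp only [Set.ofPred_forall]
    exact isClosed_iInter fun i => isClosed_iInter fun i' => isClosed_iInter fun j =>
      isClosed_iInter fun j' => isClosed_eq
        ((((he i j).mul (he i' j')).mul continuous_const).mul continuous_const)
        ((((he i j').mul (he i' j)).mul continuous_const).mul continuous_const)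
  exact isScaling_of_cross_mul_eq hK hL <|
    hclosed.mem_of_mapClusterPt hcl (Eventually.of_forall fun n => (hB n).cross_mul_eq)

variable [Fintype κ]

def rowNormalize (n : ℝ) (B : Matrix ι κ ℝ) : Matrix ι κ ℝ :=
  of fun i j => B i j / (n * ∑ l, B i l)

lemma rowNormalize_apply (n : ℝ) (B : Matrix ι κ ℝ) (i : ι) (j : κ) :
    rowNormalize n B i j = B i j / (n * ∑ l, B i l) := rfl

variable {n : ℝ} {B : Matrix ι κ ℝ}

lemma row_sum_pos [Nonempty κ] (hB : ∀ i j, 0 < B i j) (i : ι) : 0 < ∑ j, B i j :=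
  sum_pos (fun j _ => hB i j) univ_nonempty

lemma rowNormalize_pos [Nonempty κ] (hn : 0 < n) (hB : ∀ i j, 0 < B i j) (i : ι) (j : κ) :
    0 < rowNormalize n B i j :=
  div_pos (hB i j) (mul_pos hn (row_sum_pos hB i))

lemma sum_rowNormalize [Nonempty κ] (hn : 0 < n) (hB : ∀ i j, 0 < B i j) (i : ι) :
    ∑ j, rowNormalize n B i j = 1 / n := by
  simp only [rowNormalize_apply, ← sum_div]
  have := (row_sum_pos hB i).ne'
  field_simp

lemma rowNormalize_eq_self (hn : n ≠ 0) (hB : ∀ i, ∑ j, B i j = 1 / n) : rowNormalize n B = B := by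
  ext i j
  rw [rowNormalize_apply, hB, mul_one_div_cancel hn, div_one]

lemma continuousAt_rowNormalize (hB : ∀ i, n * ∑ j, B i j ≠ 0) :
    ContinuousAt (rowNormalize n) B := by
  refine continuousAt_pi.2 fun i => continuousAt_pi.2 fun j => ?_
  simp only [rowNormalize_apply]
  have hentry : ∀ l, Continuous fun M : Matrix ι κ ℝ => M i l := fun l =>
    continuous_id.matrix_elem i l
  exact ((hentry j).continuousAt.div
    (continuousAt_const.mul (continuous_finsetSum _ fun l _ => hentry l).continuousAt) (hB i))

lemma IsScaling.rowNormalize {K : Matrix ι κ ℝ} (h : IsScaling K B) [Nonempty κ] (hn : 0 < n)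
    (hB : ∀ i j, 0 < B i j) : IsScaling K (rowNormalize n B) := by
  obtain ⟨x, y, hx, hy, hxy⟩ := h
  refine ⟨fun i => x i / (n * ∑ l, B i l), y,
    fun i => div_pos (hx i) (mul_pos hn (row_sum_pos hB i)), hy, fun i j => ?_⟩
  rw [rowNormalize_apply, hxy]
  ring

variable [Fintype ι]

def logPotential (B : Matrix ι κ ℝ) : ℝ := -∑ i, ∑ j, Real.log (B i j)

lemma logPotential_transpose (B : Matrix ι κ ℝ) : logPotential Bᵀ = logPotential B := by
  rw [logPotential, logPotential, sum_comm]
  rfl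

lemma logPotential_rowNormalize [Nonempty κ] (hn : 0 < n) (hB : ∀ i j, 0 < B i j) :
    logPotential (rowNormalize n B) =
      logPotential B + Fintype.card κ * ∑ i, Real.log (n * ∑ j, B i j) := by
  have hlog : ∀ i j, Real.log (rowNormalize n B i j) =
      Real.log (B i j) - Real.log (n * ∑ l, B i l) := fun i j =>
    Real.log_div (hB i j).ne' (mul_pos hn (row_sum_pos hB i)).ne'
  simp only [logPotential, hlog, sum_sub_distrib, sum_const, card_univ, nsmul_eq_mul, mul_sum]
  ring

lemma logPotential_nonneg (hB : ∀ i j, 0 < B i j) (hB₁ : ∀ i j, B i j ≤ 1) :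
    0 ≤ logPotential B := by
  rw [logPotential, neg_nonneg]
  exact sum_nonpos fun i _ => sum_nonpos fun j _ => Real.log_nonpos (hB i j).le (hB₁ i j)

lemma exp_neg_logPotential_le (hB : ∀ i j, 0 < B i j) (hB₁ : ∀ i j, B i j ≤ 1) (i : ι) (j : κ) :
    Real.exp (-logPotential B) ≤ B i j := by
  have hlog : ∀ i j, 0 ≤ -Real.log (B i j) := fun i j =>
    neg_nonneg.2 (Real.log_nonpos (hB i j).le (hB₁ i j))
  have : -Real.log (B i j) ≤ logPotential B :=
    calc -Real.log (B i j) ≤ ∑ l, -Real.log (B i l) :=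
          single_le_sum (fun l _ => hlog i l) (mem_univ j)
      _ ≤ ∑ m, ∑ l, -Real.log (B m l) :=
        single_le_sum (f := fun m => ∑ l, -Real.log (B m l))
          (fun m _ => sum_nonneg fun l _ => hlog m l) (mem_univ i)
      _ = logPotential B := by simp [logPotential]
  rw [← Real.exp_log (hB i j)]
  exact Real.exp_le_exp.2 (by linarith)

lemma sum_sum_mul_log_sub_log_nonpos {P Q : Matrix ι κ ℝ} (hP : ∀ i j, 0 ≤ P i j)
    (hQ : ∀ i j, 0 < Q i j) (hsum : ∑ i, ∑ j, P i j = ∑ i, ∑ j, Q i j) :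
    ∑ i, ∑ j, P i j * (Real.log (Q i j) - Real.log (P i j)) ≤ 0 := by
  have h := sum_mul_log_sub_log_nonpos (p := fun q : ι × κ => P q.1 q.2)
    (q := fun q => Q q.1 q.2) (fun q => hP q.1 q.2) (fun q => hQ q.1 q.2)
    (by rwa [Fintype.sum_prod_type, Fintype.sum_prod_type])
  rwa [Fintype.sum_prod_type] at h

lemma eq_of_sum_sum_mul_log_sub_log_eq_zero {P Q : Matrix ι κ ℝ} (hP : ∀ i j, 0 ≤ P i j)
    (hQ : ∀ i j, 0 < Q i j) (hsum : ∑ i, ∑ j, P i j = ∑ i, ∑ j, Q i j)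
    (h : ∑ i, ∑ j, P i j * (Real.log (Q i j) - Real.log (P i j)) = 0) : P = Q := by
  have hpq := eq_of_sum_mul_log_sub_log_eq_zero (p := fun q : ι × κ => P q.1 q.2)
    (q := fun q => Q q.1 q.2) (fun q => hP q.1 q.2) (fun q => hQ q.1 q.2)
    (by rwa [Fintype.sum_prod_type, Fintype.sum_prod_type]) (by rwa [Fintype.sum_prod_type])
  ext i j
  exact congrFun hpq (i, j)

lemma continuousAt_logPotential (hB : ∀ i j, 0 < B i j) : ContinuousAt logPotential B := by
  refine (tendsto_finsetSum _ fun i _ => tendsto_finsetSum _ fun j _ => ?_).neg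
  exact (continuous_id.matrix_elem i j).continuousAt.log (hB i j).ne'

lemma logPotential_rowNormalize_card [Nonempty ι] [Nonempty κ] (hB : ∀ i j, 0 < B i j) :
    logPotential (rowNormalize (Fintype.card ι) B) =
      logPotential B + Fintype.card κ * ∑ i, Real.log (Fintype.card ι * ∑ j, B i j) :=
  logPotential_rowNormalize (Nat.cast_pos.2 Fintype.card_pos) hB

lemma sum_card_mul_row_sum (hB₁ : ∑ i, ∑ j, B i j = 1) :
    ∑ i, (Fintype.card ι * ∑ j, B i j : ℝ) = Fintype.card ι := by
  rw [← mul_sum, hB₁, mul_one]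

lemma logPotential_rowNormalize_le [Nonempty ι] [Nonempty κ] (hB : ∀ i j, 0 < B i j)
    (hB₁ : ∑ i, ∑ j, B i j = 1) :
    logPotential (rowNormalize (Fintype.card ι) B) ≤ logPotential B := by
  rw [logPotential_rowNormalize_card hB, add_le_iff_nonpos_right]
  exact mul_nonpos_of_nonneg_of_nonpos (Nat.cast_nonneg _) <| sum_log_nonpos_of_sum_eq_card
    (fun i => mul_pos (Nat.cast_pos.2 Fintype.card_pos) (row_sum_pos hB i))
    (sum_card_mul_row_sum hB₁)

lemma row_sum_eq_of_logPotential_rowNormalize_eq [Nonempty ι] [Nonempty κ]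
    (hB : ∀ i j, 0 < B i j) (hB₁ : ∑ i, ∑ j, B i j = 1)
    (h : logPotential (rowNormalize (Fintype.card ι) B) = logPotential B) (i : ι) :
    ∑ j, B i j = 1 / Fintype.card ι := by
  rw [logPotential_rowNormalize_card hB, add_eq_left, mul_eq_zero,
    or_iff_right (Nat.cast_ne_zero.2 Fintype.card_ne_zero)] at h
  have hone := congrFun (eq_one_of_sum_log_eq_zero
    (fun i => mul_pos (Nat.cast_pos.2 Fintype.card_pos) (row_sum_pos hB i))
    (sum_card_mul_row_sum hB₁) h) i
  exact eq_one_div_of_mul_eq_one_right hone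

end Matrix

open Matrix

section Iteration

def gibbsKernel (f : ℝ × ℝ → ℝ) (θ : ℝ) (k : ℕ) : Matrix (Fin k) (Fin k) ℝ :=
  of fun r s => Real.exp (θ * f ((r.1 + 1 : ℝ) / k, (s.1 + 1 : ℝ) / k))

variable (f : ℝ × ℝ → ℝ) (θ : ℝ) {k : ℕ}

lemma gibbsKernel_pos (r s : Fin k) : 0 < gibbsKernel f θ k r s := Real.exp_pos _

lemma ipfp_zero : ipfp f θ k 0 = gibbsKernel f θ k := rfl

lemma ipfp_succ_of_even {m : ℕ} (hm : Even m) :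
    ipfp f θ k (m + 1) = rowNormalize k (ipfp f θ k m) := by
  ext r s
  simp [ipfp, hm, rowNormalize_apply]

lemma ipfp_succ_of_not_even {m : ℕ} (hm : ¬Even m) :
    ipfp f θ k (m + 1) = (rowNormalize k (ipfp f θ k m)ᵀ)ᵀ := by
  ext r s
  simp [ipfp, hm, rowNormalize_apply]

variable [NeZero k]

lemma ipfp_pos (m : ℕ) (r s : Fin k) : 0 < ipfp f θ k m r s := by
  have hk : (0 : ℝ) < k := Nat.cast_pos.2 (NeZero.pos k)
  induction m generalizing r s with
  | zero => exact gibbsKernel_pos f θ r s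
  | succ m ih =>
    by_cases hm : Even m
    · rw [ipfp_succ_of_even f θ hm]
      exact rowNormalize_pos hk ih r s
    · rw [ipfp_succ_of_not_even f θ hm]
      exact rowNormalize_pos hk (fun i j => ih j i) s r

lemma isScaling_ipfp (m : ℕ) : IsScaling (gibbsKernel f θ k) (ipfp f θ k m) := by
  have hk : (0 : ℝ) < k := Nat.cast_pos.2 (NeZero.pos k)
  induction m with
  | zero =>
    rw [ipfp_zero]
    exact ⟨1, 1, fun _ => one_pos, fun _ => one_pos, fun r s => by simp⟩
  | succ m ih =>
    by_cases hm : Even m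
    · rw [ipfp_succ_of_even f θ hm]
      exact ih.rowNormalize hk (ipfp_pos f θ m)
    · rw [ipfp_succ_of_not_even f θ hm, ← transpose_transpose (gibbsKernel f θ k)]
      exact (ih.transpose.rowNormalize hk fun i j => ipfp_pos f θ m j i).transpose

lemma sum_ipfp_succ_of_even {m : ℕ} (hm : Even m) (r : Fin k) :
    ∑ s, ipfp f θ k (m + 1) r s = 1 / k := by
  rw [ipfp_succ_of_even f θ hm]
  exact sum_rowNormalize (Nat.cast_pos.2 (NeZero.pos k)) (ipfp_pos f θ m) r

lemma sum_ipfp_succ_of_not_even {m : ℕ} (hm : ¬Even m) (s : Fin k) :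
    ∑ r, ipfp f θ k (m + 1) r s = 1 / k := by
  rw [ipfp_succ_of_not_even f θ hm]
  exact sum_rowNormalize (Nat.cast_pos.2 (NeZero.pos k)) (fun i j => ipfp_pos f θ m j i) s

lemma sum_sum_ipfp_succ (m : ℕ) : ∑ r, ∑ s, ipfp f θ k (m + 1) r s = 1 := by
  have hk : (k : ℝ) ≠ 0 := Nat.cast_ne_zero.2 (NeZero.ne k)
  by_cases hm : Even m
  · simp [sum_ipfp_succ_of_even f θ hm, hk]
  · refine sum_comm.trans ?_
    simp [sum_ipfp_succ_of_not_even f θ hm, hk]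

lemma ipfp_succ_le_one (m : ℕ) (r s : Fin k) : ipfp f θ k (m + 1) r s ≤ 1 := by
  rw [← sum_sum_ipfp_succ f θ (k := k) m]
  exact (single_le_sum (fun l _ => (ipfp_pos f θ (m + 1) r l).le) (mem_univ s)).trans
    (single_le_sum (f := fun i => ∑ l, ipfp f θ k (m + 1) i l)
      (fun i _ => sum_nonneg fun l _ => (ipfp_pos f θ (m + 1) i l).le) (mem_univ r))

lemma logPotential_ipfp_succ_succ_le (m : ℕ) :
    logPotential (ipfp f θ k (m + 1 + 1)) ≤ logPotential (ipfp f θ k (m + 1)) := by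
  by_cases hm : Even (m + 1)
  · have h := logPotential_rowNormalize_le (ipfp_pos f θ (k := k) (m + 1))
      (sum_sum_ipfp_succ f θ m)
    rwa [Fintype.card_fin, ← ipfp_succ_of_even f θ hm] at h
  · have h := logPotential_rowNormalize_le (B := (ipfp f θ k (m + 1))ᵀ)
      (fun i j => ipfp_pos f θ (m + 1) j i) (sum_comm.trans (sum_sum_ipfp_succ f θ m))
    rw [Fintype.card_fin, logPotential_transpose] at h
    rwa [ipfp_succ_of_not_even f θ hm, logPotential_transpose]

lemma antitone_logPotential_ipfp_succ :
    Antitone fun m => logPotential (ipfp f θ k (m + 1)) :=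
  antitone_nat_of_succ_le (logPotential_ipfp_succ_succ_le f θ)

lemma tendsto_logPotential_ipfp_sub :
    Tendsto (fun m => logPotential (ipfp f θ k (m + 1 + 1)) - logPotential (ipfp f θ k (m + 1)))
      atTop (𝓝 0) := by
  have hbdd : BddBelow (Set.range fun m => logPotential (ipfp f θ k (m + 1))) :=
    ⟨0, by
      rintro _ ⟨m, rfl⟩
      exact logPotential_nonneg (ipfp_pos f θ (m + 1)) (ipfp_succ_le_one f θ m)⟩
  have h := tendsto_atTop_ciInf (antitone_logPotential_ipfp_succ f θ) hbdd
  simpa using (h.comp (tendsto_add_atTop_nat 1)).sub h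

lemma exists_pos_forall_le_ipfp : ∃ c > 0, ∀ m r s, c ≤ ipfp f θ k (m + 1) r s := by
  refine ⟨Real.exp (-logPotential (ipfp f θ k 1)), Real.exp_pos _, fun m r s => ?_⟩
  calc Real.exp (-logPotential (ipfp f θ k 1))
      ≤ Real.exp (-logPotential (ipfp f θ k (m + 1))) :=
        Real.exp_le_exp.2 (neg_le_neg (antitone_logPotential_ipfp_succ f θ (Nat.zero_le m)))
    _ ≤ ipfp f θ k (m + 1) r s :=
        exp_neg_logPotential_le (ipfp_pos f θ (m + 1)) (ipfp_succ_le_one f θ m) r s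

end Iteration

section Objective

variable (f : ℝ × ℝ → ℝ) (θ : ℝ) {k : ℕ} {A B : Matrix (Fin k) (Fin k) ℝ}

lemma objk_eq_of_isScaling (hA : IsScaling (gibbsKernel f θ k) A) :
    ∃ C, ∀ B ∈ Mk k,
      objk f θ k B = ∑ r, ∑ s, B r s * (Real.log (A r s) - Real.log (B r s)) + C := by
  obtain ⟨x, y, hx, hy, hxy⟩ := hA
  refine ⟨-(∑ r, Real.log (x r)) / k - (∑ s, Real.log (y s)) / k - 2 * Real.log k,
    fun B hB => ?_⟩
  have hlog : ∀ r s, θ * f ((r.1 + 1 : ℝ) / k, (s.1 + 1 : ℝ) / k) =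
      Real.log (A r s) - Real.log (x r) - Real.log (y s) := fun r s => by
    rw [hxy, Real.log_mul (mul_pos (hx r) (gibbsKernel_pos f θ r s)).ne' (hy s).ne',
      Real.log_mul (hx r).ne' (gibbsKernel_pos f θ r s).ne', gibbsKernel, of_apply, Real.log_exp]
    ring
  have hrow : ∑ r, ∑ s, Real.log (x r) * B r s = (∑ r, Real.log (x r)) / k := by
    simp only [← mul_sum, hB.2.1, mul_one_div, ← sum_div]
  have hcol : ∑ r, ∑ s, Real.log (y s) * B r s = (∑ s, Real.log (y s)) / k := by
    rw [sum_comm]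
    simp only [← mul_sum, hB.2.2, mul_one_div, ← sum_div]
  have hsplit : objk f θ k B = ∑ r, ∑ s, (B r s * (Real.log (A r s) - Real.log (B r s))
      - Real.log (x r) * B r s - Real.log (y s) * B r s) - 2 * Real.log k := by
    simp only [objk, mul_sum, ← mul_assoc, hlog]
    rw [sub_right_comm, ← sum_sub_distrib]
    congr 1
    refine sum_congr rfl fun r _ => ?_
    rw [← sum_sub_distrib]
    exact sum_congr rfl fun s _ => by ring
  rw [hsplit]
  simp only [sum_sub_distrib, hrow, hcol]
  ring

lemma objk_sub_objk_of_isScaling (hA : A ∈ Mk k) (hAs : IsScaling (gibbsKernel f θ k) A)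
    (hB : B ∈ Mk k) :
    objk f θ k B - objk f θ k A = ∑ r, ∑ s, B r s * (Real.log (A r s) - Real.log (B r s)) := by
  obtain ⟨C, hC⟩ := objk_eq_of_isScaling f θ hAs
  rw [hC B hB, hC A hA]
  simp

lemma sum_sum_eq_of_mem_Mk (hA : A ∈ Mk k) (hB : B ∈ Mk k) :
    ∑ r, ∑ s, B r s = ∑ r, ∑ s, A r s := by
  simp only [hA.2.1, hB.2.1]

lemma objk_le_of_isScaling (hA : A ∈ Mk k) (hAs : IsScaling (gibbsKernel f θ k) A)
    (hB : B ∈ Mk k) : objk f θ k B ≤ objk f θ k A := by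
  have h := sum_sum_mul_log_sub_log_nonpos hB.1 (hAs.pos (gibbsKernel_pos f θ))
    (sum_sum_eq_of_mem_Mk hA hB)
  rw [← objk_sub_objk_of_isScaling f θ hA hAs hB] at h
  linarith

lemma eq_of_isScaling_of_objk_le (hA : A ∈ Mk k) (hAs : IsScaling (gibbsKernel f θ k) A)
    (hB : B ∈ Mk k) (h : objk f θ k A ≤ objk f θ k B) : B = A := by
  refine eq_of_sum_sum_mul_log_sub_log_eq_zero hB.1 (hAs.pos (gibbsKernel_pos f θ))
    (sum_sum_eq_of_mem_Mk hA hB) ?_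
  rw [← objk_sub_objk_of_isScaling f θ hA hAs hB]
  linarith [objk_le_of_isScaling f θ hA hAs hB]

lemma eq_of_isScaling_of_mem_Mk (hA : A ∈ Mk k) (hAs : IsScaling (gibbsKernel f θ k) A)
    (hB : B ∈ Mk k) (hBs : IsScaling (gibbsKernel f θ k) B) : B = A :=
  eq_of_isScaling_of_objk_le f θ hA hAs hB (objk_le_of_isScaling f θ hB hBs hA)

end Objective

section Limit

variable (f : ℝ × ℝ → ℝ) (θ : ℝ) {k : ℕ} [NeZero k] {L : Matrix (Fin k) (Fin k) ℝ}

lemma sum_col_of_mapClusterPt_ipfp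
    (hL : MapClusterPt L atTop fun j => ipfp f θ k (2 * j + 1 + 1)) (s : Fin k) :
    ∑ r, L r s = 1 / k := by
  refine IsClosed.mem_of_mapClusterPt
    (s := {M : Matrix (Fin k) (Fin k) ℝ | ∑ r, M r s = 1 / (k : ℝ)}) ?_ hL
    (Eventually.of_forall fun j =>
      sum_ipfp_succ_of_not_even f θ (Nat.not_even_two_mul_add_one j) s)
  exact isClosed_eq (continuous_finsetSum _ fun r _ => continuous_id.matrix_elem r s)
    continuous_const

lemma sum_row_of_mapClusterPt_ipfp
    (hL : MapClusterPt L atTop fun j => ipfp f θ k (2 * j + 1 + 1)) (hLpos : ∀ r s, 0 < L r s)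
    (r : Fin k) : ∑ s, L r s = 1 / k := by
  have hk : (0 : ℝ) < k := Nat.cast_pos.2 (NeZero.pos k)
  have htot : ∑ r, ∑ s, L r s = 1 := by
    refine sum_comm.trans ?_
    simp [sum_col_of_mapClusterPt_ipfp f θ hL, hk.ne']
  set g : Matrix (Fin k) (Fin k) ℝ → ℝ := fun M => logPotential (rowNormalize k M) - logPotential M
  have hg : ContinuousAt g L :=
    ((continuousAt_logPotential (rowNormalize_pos hk hLpos)).comp
      (continuousAt_rowNormalize fun r => (mul_pos hk (row_sum_pos hLpos r)).ne')).sub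
      (continuousAt_logPotential hLpos)
  have hodd : Tendsto (fun j => 2 * j + 1) atTop atTop :=
    tendsto_atTop_mono (fun j => show j ≤ 2 * j + 1 by omega) tendsto_id
  have hdecr : Tendsto (fun j => g (ipfp f θ k (2 * j + 1 + 1))) atTop (𝓝 0) :=
    ((tendsto_logPotential_ipfp_sub f θ).comp hodd).congr fun j => by
      rw [Function.comp_apply,
        ipfp_succ_of_even f θ (Nat.even_add_one.2 (Nat.not_even_two_mul_add_one j))]
  have heq := sub_eq_zero.1 ((hL.continuousAt_comp hg).eq_of_tendsto hdecr)
  have := row_sum_eq_of_logPotential_rowNormalize_eq hLpos htot (by rwa [Fintype.card_fin]) r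
  rwa [Fintype.card_fin] at this

lemma mem_Mk_and_isScaling_of_mapClusterPt_ipfp
    (hL : MapClusterPt L atTop fun j => ipfp f θ k (2 * j + 1 + 1)) (hLpos : ∀ r s, 0 < L r s) :
    L ∈ Mk k ∧ IsScaling (gibbsKernel f θ k) L :=
  ⟨⟨fun r s => (hLpos r s).le, sum_row_of_mapClusterPt_ipfp f θ hL hLpos,
    sum_col_of_mapClusterPt_ipfp f θ hL⟩,
    isScaling_of_mapClusterPt (gibbsKernel_pos f θ) hLpos (fun _ => isScaling_ipfp f θ _) hL⟩

end Limit

theorem tendsto_ipfp (f : ℝ × ℝ → ℝ) (θ : ℝ) {k : ℕ} [NeZero k] :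
    ∃ A ∈ Mk k, IsScaling (gibbsKernel f θ k) A ∧ Tendsto (ipfp f θ k) atTop (𝓝 A) := by
  have hk : (0 : ℝ) < k := Nat.cast_pos.2 (NeZero.pos k)
  obtain ⟨c, hc, hcle⟩ := exists_pos_forall_le_ipfp f θ (k := k)
  set S : Set (Matrix (Fin k) (Fin k) ℝ) := Set.univ.pi fun _ => Set.univ.pi fun _ => Set.Icc c 1
  have hS : IsCompact S := isCompact_univ_pi fun _ => isCompact_univ_pi fun _ => isCompact_Icc
  have hmem : ∀ m, ipfp f θ k (m + 1) ∈ S := fun m =>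
    Set.mem_univ_pi.2 fun r => Set.mem_univ_pi.2 fun s => ⟨hcle m r s, ipfp_succ_le_one f θ m r s⟩
  have hcluster : ∀ L ∈ S, MapClusterPt L atTop (fun j => ipfp f θ k (2 * j + 1 + 1)) →
      L ∈ Mk k ∧ IsScaling (gibbsKernel f θ k) L := by
    intro L hLS hL
    exact mem_Mk_and_isScaling_of_mapClusterPt_ipfp f θ hL fun r s =>
      hc.trans_le (Set.mem_univ_pi.1 (Set.mem_univ_pi.1 hLS r) s).1
  obtain ⟨A, hAS, hA⟩ := hS.exists_mapClusterPt (f := atTop)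
    (u := fun j => ipfp f θ k (2 * j + 1 + 1))
    (tendsto_principal.2 (Eventually.of_forall fun j => hmem (2 * j + 1)))
  obtain ⟨hAM, hAs⟩ := hcluster A hAS hA
  have heven : Tendsto (fun j => ipfp f θ k (2 * j + 1 + 1)) atTop (𝓝 A) :=
    hS.tendsto_nhds_of_unique_mapClusterPt (Eventually.of_forall fun j => hmem _)
      fun L hLS hL => eq_of_isScaling_of_mem_Mk f θ hAM hAs (hcluster L hLS hL).1
        (hcluster L hLS hL).2
  have hodd : Tendsto (fun j => ipfp f θ k (2 * j + 1 + 1 + 1)) atTop (𝓝 A) := by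
    rw [← rowNormalize_eq_self hk.ne' hAM.2.1]
    refine ((continuousAt_rowNormalize fun r => by simp [hAM.2.1 r, hk.ne']).tendsto.comp
      heven).congr fun j => ?_
    exact (ipfp_succ_of_even f θ (Nat.even_add_one.2 (Nat.not_even_two_mul_add_one j))).symm
  exact ⟨A, hAM, hAs, (tendsto_add_atTop_iff_nat 2).1
    (Tendsto.of_even_of_odd (u := fun n => ipfp f θ k (n + 2)) heven hodd)⟩

theorem ipfp_limit_is_unique_maximizer_general (f : ℝ × ℝ → ℝ)
    (θ : ℝ) (k : ℕ) (hk : 0 < k) :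
    ∃ A ∈ Mk k,
      (∀ r s : Fin k, Tendsto (fun m : ℕ => ipfp f θ k m r s) atTop (𝓝 (A r s))) ∧
      (∀ B ∈ Mk k, objk f θ k B ≤ objk f θ k A) ∧
      (∀ B ∈ Mk k, (∀ C ∈ Mk k, objk f θ k C ≤ objk f θ k B) → B = A) := by
  have : NeZero k := ⟨hk.ne'⟩
  obtain ⟨A, hAM, hAs, hlim⟩ := tendsto_ipfp f θ (k := k)
  exact ⟨A, hAM, fun r s => tendsto_pi_nhds.1 (tendsto_pi_nhds.1 hlim r) s,
    fun B hB => objk_le_of_isScaling f θ hAM hAs hB,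
    fun B hB hBmax => eq_of_isScaling_of_objk_le f θ hAM hAs hB (hBmax A hAM)⟩

/-- The discrete objective attains its supremum over `𝓜_k` at a unique
matrix, which is the entrywise limit of the IPFP iterates. -/
theorem ipfp_limit_is_unique_maximizer (f : ℝ × ℝ → ℝ) (hf : ContinuousOn f unitSq)
    (θ : ℝ) (k : ℕ) (hk : 0 < k) :
    ∃ A ∈ Mk k,
      (∀ r s : Fin k, Tendsto (fun m : ℕ => ipfp f θ k m r s) atTop (𝓝 (A r s))) ∧
      (∀ B ∈ Mk k, objk f θ k B ≤ objk f θ k A) ∧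
      (∀ B ∈ Mk k, (∀ C ∈ Mk k, objk f θ k C ≤ objk f θ k B) → B = A) :=
  ipfp_limit_is_unique_maximizer_general f θ k hk
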